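/- Stirling approximation of the posterior Poisson–Dirichlet weights (Example 5, direct computation): let α ∈ (0,1), θ > -α, let n ≥ 1 and k ≥ 1 be fixed integers, let s > 0, and set k*_m = ⌈s·m^α⌉. Then, as m → ∞, the ratio of (θ+kα)_{k*_m↑α} / (θ+n)_m to α^{k*_m} · (k*_m)^{θ/α + k} · Γ(k*_m) · Γ(θ+n) / (Γ(m) · Γ(θ/α + k) · m^{θ+n}) tends to 1. -/

import Mathlib

/-- Rising factorial `(x)_m = x(x+1)⋯(x+m-1)`, with `(x)_0 = 1`. -/
noncomputable def risingFactorial (x : ℝ) (n : ℕ) : ℝ :=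
  ∏ i ∈ Finset.range n, (x + i)

/-- Generalized rising factorial `(x)_{j↑α} = x(x+α)(x+2α)⋯(x+(j-1)α)`, with `(x)_{0↑α} = 1`. -/
noncomputable def genRisingFactorial (x α : ℝ) (k : ℕ) : ℝ :=
  ∏ i ∈ Finset.range k, (x + i * α)

/-! Since `(θ+kα)_{K↑α} = α^K (θ/α+k)_K`, the ratio splits into two instances of Euler's limit
formula `(c)_j ~ j^c Γ(j) / Γ(c)` as `j → ∞`: one with `c = θ/α + k` and `j = ⌈s m^α⌉`, which
tends to infinity with `m`, and one with `c = θ + n` and `j = m`. -/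

open Filter Topology

lemma genRisingFactorial_eq_pow_mul_risingFactorial {α : ℝ} (hα : α ≠ 0) (x : ℝ) (j : ℕ) :
    genRisingFactorial x α j = α ^ j * risingFactorial (x / α) j := by
  have h (i : ℕ) : x + i * α = α * (x / α + i) := by field_simp
  simp only [genRisingFactorial, risingFactorial, h, Finset.prod_mul_distrib, Finset.prod_const,
    Finset.card_range]

lemma tendsto_risingFactorial_mul_Gamma_div {c : ℝ} (hc : Real.Gamma c ≠ 0) :
    Tendsto (fun j : ℕ => risingFactorial c j * Real.Gamma c / ((j : ℝ) ^ c * Real.Gamma j))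
      atTop (𝓝 1) := by
  rw [← tendsto_add_atTop_iff_nat 1]
  have hlim : Tendsto (fun N : ℕ => ((N : ℝ) / (N + 1)) ^ c * Real.Gamma c / Real.GammaSeq c N)
      atTop (𝓝 (1 ^ c * Real.Gamma c / Real.Gamma c)) :=
    (((tendsto_natCast_div_add_atTop (1 : ℝ)).rpow_const (Or.inl one_ne_zero)).mul_const _).div
      (Real.GammaSeq_tendsto_Gamma c) hc
  rw [Real.one_rpow, one_mul, div_self hc] at hlim
  refine hlim.congr' ?_
  filter_upwards [eventually_ne_atTop 0] with N hN
  have hN : (N : ℝ) ≠ 0 := Nat.cast_ne_zero.2 hN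
  rw [Real.GammaSeq, div_div_eq_mul_div, Real.div_rpow (by positivity) (by positivity),
    Nat.cast_add_one, Real.Gamma_nat_eq_factorial, risingFactorial]
  field_simp

lemma tendsto_ceil_mul_rpow_atTop {s α : ℝ} (hs : 0 < s) (hα : 0 < α) :
    Tendsto (fun m : ℕ => ⌈s * (m : ℝ) ^ α⌉₊) atTop atTop :=
  tendsto_nat_ceil_atTop.comp <|
    ((tendsto_rpow_atTop hα).comp tendsto_natCast_atTop_atTop).const_mul_atTop hs

/-- Stirling approximation of the posterior Poisson–Dirichlet weights: for `α ∈ (0,1)`,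
`θ > -α`, fixed integers `n, k ≥ 1`, `s > 0` and `k*_m = ⌈s·m^α⌉`, the ratio of
`(θ+kα)_{k*_m↑α} / (θ+n)_m` to
`α^{k*_m}·(k*_m)^{θ/α+k}·Γ(k*_m)·Γ(θ+n) / (Γ(m)·Γ(θ/α+k)·m^{θ+n})` tends to `1`. -/
theorem stirling_posterior_PD_weights (α θ s : ℝ) (hα : α ∈ Set.Ioo (0:ℝ) 1)
    (hθ : θ > -α) (n k : ℕ) (hn : 1 ≤ n) (hk : 1 ≤ k) (hs : 0 < s) :
    Filter.Tendsto
      (fun m : ℕ =>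
        (genRisingFactorial (θ + k * α) α ⌈s * (m : ℝ) ^ α⌉₊ /
            risingFactorial (θ + n) m) /
          (α ^ ⌈s * (m : ℝ) ^ α⌉₊ *
              (⌈s * (m : ℝ) ^ α⌉₊ : ℝ) ^ (θ / α + k) *
              Real.Gamma (⌈s * (m : ℝ) ^ α⌉₊) * Real.Gamma (θ + n) /
            (Real.Gamma m * Real.Gamma (θ / α + k) * (m : ℝ) ^ (θ + n))))
      Filter.atTop (nhds 1) := by
  have hα0 : 0 < α := hα.1
  have hc : 0 < θ / α + k := by
    have : -1 < θ / α := by rwa [lt_div_iff₀ hα0, neg_one_mul]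
    have : (1 : ℝ) ≤ k := by exact_mod_cast hk
    linarith
  have ha : 0 < θ + n := by
    have : (1 : ℝ) ≤ n := by exact_mod_cast hn
    linarith [hα.2]
  have hlim := ((tendsto_risingFactorial_mul_Gamma_div (Real.Gamma_pos_of_pos hc).ne').comp
    (tendsto_ceil_mul_rpow_atTop hs hα0)).div
    (tendsto_risingFactorial_mul_Gamma_div (Real.Gamma_pos_of_pos ha).ne') one_ne_zero
  rw [div_one] at hlim
  refine hlim.congr fun m => ?_
  have hθk : (θ + k * α) / α = θ / α + k := by field_simp
  simp only [Pi.div_apply, Function.comp_apply,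
    genRisingFactorial_eq_pow_mul_risingFactorial hα0.ne', hθk]
  field_simp [pow_ne_zero _ hα0.ne']
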